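/- arXiv:1706.06243 — 7 statements merged into one kernel-verified Lean document; each statement's English description precedes it below -/
import Mathlib

section
/- (Optimality of the greedy complete theory) Let V be a finite set of expected-value voters and let q(i) = Σ_{v∈V} p_v(i). The singleton theory {ω*} with ω*(i) = true iff q(i) ≥ 0 maximizes Σ_{v∈V} ut_v(S) over all nonempty finite sets S of worlds. -/
def sgn (b : Bool) : ℝ := if b then 1 else -1

def u {n : ℕ} (p : Fin n → ℝ) (ω : Fin n → Bool) : ℝ := ∑ i, p i * sgn (ω i)

noncomputable def utE {n : ℕ} (p : Fin n → ℝ) (S : Finset (Fin n → Bool)) : ℝ :=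
  (∑ ω ∈ S, u p ω) / S.card

/-- The greedy complete theory {ω*}, with ω*(i) = true iff Σ_v p_v(i) ≥ 0,
maximizes total expected-value utility. -/
theorem stmt_6 {n : ℕ} {ι : Type*} (V : Finset ι) (p : ι → Fin n → ℝ) :
    ∀ (S : Finset (Fin n → Bool)), S.Nonempty →
      ∑ v ∈ V, utE (p v) S ≤
        ∑ v ∈ V, utE (p v) {fun i => decide (0 ≤ ∑ v ∈ V, p v i)} := by
  intro S hS
  set q : Fin n → ℝ := fun i => ∑ v ∈ V, p v i with hq
  have hsum : ∀ ω : Fin n → Bool, ∑ v ∈ V, u (p v) ω = u q ω := by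
    intro ω
    simp only [u, hq]
    rw [Finset.sum_comm]
    simp [Finset.sum_mul]
  have key : ∀ ω : Fin n → Bool, u q ω ≤ u q (fun i => decide (0 ≤ q i)) := by
    intro ω
    apply Finset.sum_le_sum
    intro i _
    by_cases h : 0 ≤ q i
    · cases hω : ω i <;> simp [sgn, h] <;> linarith
    · cases hω : ω i <;> simp [sgn, h] <;> linarith [not_le.mp h]
  have hRHS : ∑ v ∈ V, utE (p v) {fun i => decide (0 ≤ q i)} =
      u q (fun i => decide (0 ≤ q i)) := by
    simp only [utE, Finset.sum_singleton, Finset.card_singleton, Nat.cast_one, div_one]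
    exact hsum _
  rw [hRHS]
  have hcard : (0 : ℝ) < S.card := by exact_mod_cast Finset.card_pos.mpr hS
  have hLHS : ∑ v ∈ V, utE (p v) S = (∑ ω ∈ S, u q ω) / S.card := by
    simp only [utE, ← Finset.sum_div]
    rw [Finset.sum_comm]
    congr 1
    exact Finset.sum_congr rfl fun ω _ => hsum ω
  rw [hLHS, div_le_iff₀ hcard]
  calc ∑ ω ∈ S, u q ω ≤ ∑ _ω ∈ S, u q (fun i => decide (0 ≤ q i)) :=
        Finset.sum_le_sum fun ω _ => key ω
    _ = u q (fun i => decide (0 ≤ q i)) * S.card := by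
        rw [Finset.sum_const, nsmul_eq_mul, mul_comm]
end

section
/- (Optimality of the greedy complete theory for pessimistic voters) Let V be a finite set of pessimistic voters and q(i) = Σ_{v∈V} p_v(i). Then the singleton theory {ω*} with ω*(i) = true iff q(i) ≥ 0 maximizes Σ_{v∈V} ut_v(S) over all nonempty finite sets S of worlds, where ut_v(S) = min_{ω∈S} u_v(ω). -/
lemma sum_u_eq {n : ℕ} {ι : Type*} (V : Finset ι) (p : ι → Fin n → ℝ)
    (ω : Fin n → Bool) :
    ∑ v ∈ V, u (p v) ω = ∑ i, (∑ v ∈ V, p v i) * sgn (ω i) := by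
  simp only [u, Finset.sum_mul]
  rw [Finset.sum_comm]

/-- The greedy complete theory {ω*}, with ω*(i) = true iff Σ_v p_v(i) ≥ 0,
maximizes total pessimistic utility. -/
theorem stmt_7 {n : ℕ} {ι : Type*} (V : Finset ι) (p : ι → Fin n → ℝ) :
    ∀ (S : Finset (Fin n → Bool)) (hS : S.Nonempty),
      ∑ v ∈ V, S.inf' hS (u (p v)) ≤
        ∑ v ∈ V,
          ({fun i => decide (0 ≤ ∑ v ∈ V, p v i)} : Finset (Fin n → Bool)).inf'
            (Finset.singleton_nonempty _) (u (p v)) := by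
  intro S hS
  obtain ⟨ω₀, hω₀⟩ := hS
  calc ∑ v ∈ V, S.inf' ⟨ω₀, hω₀⟩ (u (p v))
      ≤ ∑ v ∈ V, u (p v) ω₀ :=
        Finset.sum_le_sum fun v _ => Finset.inf'_le _ hω₀
    _ = ∑ i, (∑ v ∈ V, p v i) * sgn (ω₀ i) := sum_u_eq V p ω₀
    _ ≤ ∑ i, |∑ v ∈ V, p v i| := by
        apply Finset.sum_le_sum
        intro i _
        rcases (ω₀ i) with _ | _ <;> simp [sgn]
        · exact neg_le_abs _
        · exact le_abs_self _
    _ = ∑ v ∈ V, u (p v) (fun i => decide (0 ≤ ∑ v ∈ V, p v i)) := by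
        rw [sum_u_eq]
        apply Finset.sum_congr rfl
        intro i _
        by_cases h : 0 ≤ ∑ v ∈ V, p v i
        · simp [sgn, h, abs_of_nonneg h]
        · simp only [sgn, h, decide_false, if_false]
          rw [abs_of_neg (lt_of_not_ge h)]; simp
    _ = ∑ v ∈ V,
          ({fun i => decide (0 ≤ ∑ v ∈ V, p v i)} : Finset (Fin n → Bool)).inf'
            (Finset.singleton_nonempty _) (u (p v)) := by simp
end

section
/- (Correctness of the SAT reduction for optimistic utility, Theorem 1) Let φ be a Boolean formula over variables indexed by Fin n, and consider worlds over Fin (n+1) with an extra variable x*. Let T be the set of worlds ω over Fin (n+1) satisfying 'ω(x*) = true → (the restriction of ω to Fin n satisfies φ)'. Let v have p_v(x*) = 1 and p_v(i) = 0 for all other i. Then the optimistic utility max_{ω ∈ T} u_v(ω) ≥ 1 if and only if φ is satisfiable; moreover if φ is unsatisfiable then this maximum equals -1. -/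
lemma u_eq {n : ℕ} (ω : Fin (n+1) → Bool) :
    u (fun j => if j = Fin.last n then 1 else 0) ω = sgn (ω (Fin.last n)) := by
  unfold u
  rw [Finset.sum_eq_single (Fin.last n)]
  · simp
  · intro b _ hb; simp [hb]
  · simp

/-- Correctness of the SAT reduction for optimistic utility (Theorem 1):
with T = models of (x* → φ) and p(x*) = 1, p ≡ 0 elsewhere,
the optimistic utility is ≥ 1 iff φ is satisfiable, and equals -1 if not. -/
theorem stmt_9 {n : ℕ} (φ : (Fin n → Bool) → Prop) [DecidablePred φ] :
    ∀ hT : (Finset.univ.filter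
        (fun ω : Fin (n+1) → Bool =>
          ω (Fin.last n) = true → φ (fun i => ω i.castSucc))).Nonempty,
      (1 ≤ (Finset.univ.filter
          (fun ω : Fin (n+1) → Bool =>
            ω (Fin.last n) = true → φ (fun i => ω i.castSucc))).sup' hT
          (u (fun j => if j = Fin.last n then 1 else 0)) ↔ ∃ a, φ a) ∧
      (¬ (∃ a, φ a) →
        (Finset.univ.filter
          (fun ω : Fin (n+1) → Bool =>
            ω (Fin.last n) = true → φ (fun i => ω i.castSucc))).sup' hT
          (u (fun j => if j = Fin.last n then 1 else 0)) = -1) := by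
  intro hT
  set T := (Finset.univ.filter
      (fun ω : Fin (n+1) → Bool =>
        ω (Fin.last n) = true → φ (fun i => ω i.castSucc))) with hTdef
  have hmemT : ∀ ω, ω ∈ T ↔ (ω (Fin.last n) = true → φ (fun i => ω i.castSucc)) := by
    intro ω; simp [hTdef]
  have hunsat : ¬ (∃ a, φ a) →
      T.sup' hT (u (fun j => if j = Fin.last n then 1 else 0)) = -1 := by
    intro hns
    apply le_antisymm
    · apply Finset.sup'_le
      intro ω hω
      rw [u_eq]
      have hfalse : ω (Fin.last n) = false := by
        by_contra h
        have ht : ω (Fin.last n) = true := by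
          cases hb : ω (Fin.last n) with
          | false => exact absurd hb h
          | true => rfl
        exact hns ⟨_, (hmemT ω).1 hω ht⟩
      simp [sgn, hfalse]
    · obtain ⟨ω, hω⟩ := hT
      calc (-1 : ℝ) ≤ u (fun j => if j = Fin.last n then 1 else 0) ω := by
              rw [u_eq]; unfold sgn; split <;> norm_num
        _ ≤ _ := Finset.le_sup' _ hω
  constructor
  · constructor
    · intro h1
      by_contra hns
      rw [hunsat hns] at h1
      norm_num at h1
    · rintro ⟨a, ha⟩
      set ω : Fin (n+1) → Bool := Fin.snoc a true with hω
      have hωT : ω ∈ T := by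
        rw [hmemT]
        intro _
        have : (fun i : Fin n => ω i.castSucc) = a := by
          funext i; simp [hω, Fin.snoc_castSucc]
        rw [this]; exact ha
      calc (1:ℝ) = u (fun j => if j = Fin.last n then 1 else 0) ω := by
            rw [u_eq]; simp [hω, sgn]
        _ ≤ _ := Finset.le_sup' _ hωT
  · exact hunsat
end

section
/- (Correctness of the UNSAT reduction for pessimistic utility, Theorem 3) With the same theory T as in the optimistic reduction—worlds ω over Fin (n+1) such that ω(x*) = true implies the restriction of ω satisfies φ—and voter v with p_v(x*) = -1 and p_v(i) = 0 otherwise, the pessimistic utility min_{ω ∈ T} u_v(ω) ≥ 1 if and only if φ is unsatisfiable. -/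
lemma uval {n : ℕ} (ω : Fin (n+1) → Bool) :
    u (fun j => if j = Fin.last n then (-1:ℝ) else 0) ω = -sgn (ω (Fin.last n)) := by
  unfold u
  rw [Finset.sum_eq_single (Fin.last n)]
  · simp
  · intro b _ hb; simp [hb]
  · simp

/-- Correctness of the UNSAT reduction for pessimistic utility (Theorem 3):
with T = models of (x* → φ) and p(x*) = -1, p ≡ 0 elsewhere,
the pessimistic utility is ≥ 1 iff φ is unsatisfiable. -/
theorem stmt_10 {n : ℕ} (φ : (Fin n → Bool) → Prop) [DecidablePred φ] :
    ∀ hT : (Finset.univ.filter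
        (fun ω : Fin (n+1) → Bool =>
          ω (Fin.last n) = true → φ (fun i => ω i.castSucc))).Nonempty,
      (1 ≤ (Finset.univ.filter
          (fun ω : Fin (n+1) → Bool =>
            ω (Fin.last n) = true → φ (fun i => ω i.castSucc))).inf' hT
          (u (fun j => if j = Fin.last n then -1 else 0)) ↔ ¬ ∃ a, φ a) := by
  intro hT
  constructor
  · rintro h ⟨a, ha⟩
    have hmem : (Fin.snoc a true : Fin (n+1) → Bool) ∈
        Finset.univ.filter (fun ω : Fin (n+1) → Bool =>
          ω (Fin.last n) = true → φ (fun i => ω i.castSucc)) := by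
      simp only [Finset.mem_filter, Finset.mem_univ, true_and]
      intro _
      have he : (fun i : Fin n => (Fin.snoc a true : Fin (n+1) → Bool) i.castSucc) = a := by
        funext i; simp
      rw [he]; exact ha
    have hle := Finset.inf'_le (u (fun j => if j = Fin.last n then (-1:ℝ) else 0)) hmem
    rw [uval] at hle
    have : (Fin.snoc a true : Fin (n+1) → Bool) (Fin.last n) = true := by simp
    rw [this] at hle
    simp only [sgn, if_true] at hle
    linarith [h.trans hle]
  · intro hns
    apply Finset.le_inf'
    intro ω hω
    simp only [Finset.mem_filter, Finset.mem_univ, true_and] at hω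
    have hfalse : ω (Fin.last n) = false := by
      cases hlast : ω (Fin.last n)
      · rfl
      · exact absurd ⟨_, hω hlast⟩ hns
    rw [uval, hfalse]
    simp [sgn]
end

section
/- (Counting identity in the #P-hardness reduction, Lemma 1) Let φ be a Boolean formula over Fin n with S satisfying assignments, S ≥ 1. Over Fin n plus two extra variables y, z, define ψ(ω) ≡ (φ holds of ω restricted to Fin n) ∧ ω(y) ∧ ω(z), and ψ'(ω) ≡ ψ(ω) ∨ (ω(y) ∧ ¬ω(z) ∧ ∀ i < n, ω(i) = true). Let voter D have p_D(y) = p_D(z) = 1 and p_D(i) = 0 for i < n. Then ψ has exactly S satisfying worlds, ψ' has exactly S+1 satisfying worlds, ut_D(models(ψ)) / ut_D(models(ψ')) = (S+1)/S, and 1 / (ut_D(models(ψ)) / ut_D(models(ψ')) − 1) = S. -/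
/-- Counting identity in the #P-hardness reduction (Lemma 1). -/
theorem stmt_11 {n : ℕ} (φ : (Fin n → Bool) → Prop) [DecidablePred φ]
    (S : ℕ) (hS : S = (Finset.univ.filter fun a : Fin n → Bool => φ a).card)
    (hS1 : 1 ≤ S) :
    -- y is variable n, z is variable n+1; restriction uses Fin.castAdd 2
    let y : Fin (n+2) := ⟨n, by omega⟩
    let z : Fin (n+2) := ⟨n+1, by omega⟩
    let ψ : (Fin (n+2) → Bool) → Prop :=
      fun ω => φ (fun i => ω (i.castAdd 2)) ∧ ω y = true ∧ ω z = true
    let ψ' : (Fin (n+2) → Bool) → Prop :=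
      fun ω => ψ ω ∨ (ω y = true ∧ ω z = false ∧ ∀ i : Fin n, ω (i.castAdd 2) = true)
    let pD : Fin (n+2) → ℝ := fun j => if j = y ∨ j = z then 1 else 0
    let Mψ : Finset (Fin (n+2) → Bool) :=
      Finset.univ.filter (fun ω => ψ ω)
    let Mψ' : Finset (Fin (n+2) → Bool) :=
      Finset.univ.filter (fun ω => ψ' ω)
    Mψ.card = S ∧ Mψ'.card = S + 1 ∧
    utE pD Mψ / utE pD Mψ' = (S + 1 : ℝ) / S ∧
    1 / (utE pD Mψ / utE pD Mψ' - 1) = (S : ℝ) := by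
  intro y z ψ ψ' pD Mψ Mψ'
  have hyz : y ≠ z := by simp [y, z, Fin.ext_iff]
  -- u formula
  have hu : ∀ ω : Fin (n+2) → Bool, u pD ω = sgn (ω y) + sgn (ω z) := by
    intro ω
    have h1 : ∑ j ∈ ({y, z} : Finset (Fin (n+2))), pD j * sgn (ω j)
        = ∑ j, pD j * sgn (ω j) := by
      refine Finset.sum_subset (Finset.subset_univ _) ?_
      intro c _ hc
      simp only [Finset.mem_insert, Finset.mem_singleton, not_or] at hc
      simp [pD, hc.1, hc.2]
    rw [u, ← h1, Finset.sum_pair hyz]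
    simp [pD, hyz]
  -- bijection for Mψ card
  have hcard : Mψ.card = S := by
    rw [hS]
    refine Finset.card_bij' (fun ω _ => fun i => ω (i.castAdd 2))
      (fun a _ => Fin.append a ![true, true]) ?_ ?_ ?_ ?_
    · intro ω hω
      simp only [Mψ, Finset.mem_filter] at hω
      simpa using hω.2.1
    · intro a ha
      simp only [Finset.mem_filter, Finset.mem_univ, true_and] at ha
      have h1 : Fin.append a ![true, true] y = true := by
        have : y = Fin.natAdd n (0 : Fin 2) := by simp [y, Fin.ext_iff]
        rw [this, Fin.append_right]; rfl
      have h2 : Fin.append a ![true, true] z = true := by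
        have : z = Fin.natAdd n (1 : Fin 2) := by simp [z, Fin.ext_iff]
        rw [this, Fin.append_right]; rfl
      simp only [Mψ, Finset.mem_filter, Finset.mem_univ, true_and]
      refine ⟨?_, h1, h2⟩
      simpa [Fin.append_left] using ha
    · intro ω hω
      simp only [Mψ, Finset.mem_filter, Finset.mem_univ, true_and] at hω
      funext j
      refine Fin.addCases (fun i => ?_) (fun k => ?_) j
      · simp [Fin.append_left]
      · simp only [Fin.append_right]
        fin_cases k
        · simpa [y, Fin.natAdd] using hω.2.1.symm
        · simpa [z, Fin.natAdd] using hω.2.2.symm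
    · intro a _
      funext i
      simp [Fin.append_left]
  -- the extra world
  set ω₀ : Fin (n+2) → Bool := Fin.append (fun _ => true) ![true, false] with hω₀
  have hω₀y : ω₀ y = true := by
    have : y = Fin.natAdd n (0 : Fin 2) := by simp [y, Fin.ext_iff]
    rw [hω₀, this, Fin.append_right]; rfl
  have hω₀z : ω₀ z = false := by
    have : z = Fin.natAdd n (1 : Fin 2) := by simp [z, Fin.ext_iff]
    rw [hω₀, this, Fin.append_right]; rfl
  have hω₀c : ∀ i : Fin n, ω₀ (i.castAdd 2) = true := fun i => by
    rw [hω₀, Fin.append_left]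
  have hM' : Mψ' = insert ω₀ Mψ := by
    ext ω
    simp only [Mψ', Mψ, Finset.mem_filter, Finset.mem_univ, true_and, Finset.mem_insert, ψ']
    constructor
    · rintro (h | h)
      · exact Or.inr h
      · left
        funext j
        refine Fin.addCases (fun i => ?_) (fun k => ?_) j
        · rw [hω₀c i]; exact h.2.2 i
        · fin_cases k
          · rw [show (Fin.natAdd n (⟨0, by omega⟩ : Fin 2)) = y from by simp [y, Fin.ext_iff],
              hω₀y]; exact h.1
          · rw [show (Fin.natAdd n (⟨1, by omega⟩ : Fin 2)) = z from by simp [z, Fin.ext_iff],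
              hω₀z]; exact h.2.1
    · rintro (rfl | h)
      · exact Or.inr ⟨hω₀y, hω₀z, hω₀c⟩
      · exact Or.inl h
  have hnotmem : ω₀ ∉ Mψ := by
    simp only [Mψ, Finset.mem_filter, Finset.mem_univ, true_and, ψ]
    intro h
    rw [hω₀z] at h
    exact Bool.false_ne_true h.2.2
  have hcard' : Mψ'.card = S + 1 := by
    rw [hM', Finset.card_insert_of_notMem hnotmem, hcard]
  -- sums
  have hsum : ∑ ω ∈ Mψ, u pD ω = 2 * S := by
    have : ∀ ω ∈ Mψ, u pD ω = 2 := by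
      intro ω hω
      simp only [Mψ, Finset.mem_filter, Finset.mem_univ, true_and, ψ] at hω
      rw [hu, hω.2.1, hω.2.2]
      norm_num [sgn]
    rw [Finset.sum_congr rfl this, Finset.sum_const, hcard]
    rw [nsmul_eq_mul]; ring
  have hsum' : ∑ ω ∈ Mψ', u pD ω = 2 * S := by
    rw [hM', Finset.sum_insert hnotmem, hsum, hu, hω₀y, hω₀z]
    norm_num [sgn]
  have hSpos : (0 : ℝ) < S := by exact_mod_cast hS1
  have hut1 : utE pD Mψ = 2 := by
    rw [utE, hsum, hcard]
    field_simp
  have hut2 : utE pD Mψ' = 2 * S / (S + 1) := by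
    rw [utE, hsum', hcard']
    push_cast; ring_nf
  have hratio : utE pD Mψ / utE pD Mψ' = (S + 1 : ℝ) / S := by
    rw [hut1, hut2]
    field_simp
  refine ⟨hcard, hcard', hratio, ?_⟩
  rw [hratio]
  field_simp
  ring
end

section
/- (Correctness of the CNF-SAT reduction to pessimistic threshold satisfaction, Theorem 8) Let φ = C_1 ∧ … ∧ C_m be a CNF formula over Fin n where clause C_j has r_j ≥ 1 literals. For each j define voter v_j with p_{v_j}(i) = 1/r_j if x_i appears positively in C_j, −1/r_j if x_i appears negatively, and 0 otherwise, and threshold k_j = −(r_j − 1)/r_j. Then: (a) for a single world ω, u_{v_j}(ω) ≥ k_j iff ω satisfies clause C_j; and (b) there exists a nonempty set S of worlds with min_{ω∈S} u_{v_j}(ω) ≥ k_j for all j = 1,…,m if and only if φ is satisfiable. -/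
/-- Voter preferences associated with a clause C (a set of literals:
variable index paired with polarity, true = positive). -/
noncomputable def clauseVoter {n : ℕ} (C : Finset (Fin n × Bool)) : Fin n → ℝ :=
  fun i => if (i, true) ∈ C then 1 / C.card
           else if (i, false) ∈ C then -(1 / C.card) else 0

lemma key {n : ℕ} (C : Finset (Fin n × Bool)) (hne : C.Nonempty)
    (hdist : ∀ l₁ ∈ C, ∀ l₂ ∈ C, l₁.1 = l₂.1 → l₁ = l₂) (ω : Fin n → Bool) :
    -(((C.card : ℝ) - 1) / C.card) ≤ u (clauseVoter C) ω ↔ ∃ l ∈ C, ω l.1 = l.2 := by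
  have hr : 0 < C.card := hne.card_pos
  have hrR : (0:ℝ) < C.card := by exact_mod_cast hr
  set r := C.card with hrdef
  -- step 1
  have h1 : u (clauseVoter C) ω
      = ∑ l ∈ C, (1/(r:ℝ)) * (if ω l.1 = l.2 then 1 else -1) := by
    unfold u
    rw [← Finset.sum_fiberwise C (fun l => l.1)
      (fun l => (1/(r:ℝ)) * (if ω l.1 = l.2 then 1 else -1))]
    apply Finset.sum_congr rfl
    intro i _
    by_cases ht : (i, true) ∈ C
    · have hfil : C.filter (fun l => l.1 = i) = {(i, true)} := by
        ext l
        simp only [Finset.mem_filter, Finset.mem_singleton]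
        constructor
        · rintro ⟨hl, h⟩; exact hdist l hl (i, true) ht h
        · rintro rfl; exact ⟨ht, rfl⟩
      rw [hfil, Finset.sum_singleton]
      cases h : ω i <;> simp [clauseVoter, ht, sgn, h, hrdef]
    · by_cases hf : (i, false) ∈ C
      · have hfil : C.filter (fun l => l.1 = i) = {(i, false)} := by
          ext l
          simp only [Finset.mem_filter, Finset.mem_singleton]
          constructor
          · rintro ⟨hl, h⟩; exact hdist l hl (i, false) hf h
          · rintro rfl; exact ⟨hf, rfl⟩
        rw [hfil, Finset.sum_singleton]
        cases h : ω i <;> simp [clauseVoter, ht, hf, sgn, h, hrdef]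
      · have hfil : C.filter (fun l => l.1 = i) = ∅ := by
          ext l
          simp only [Finset.mem_filter, Finset.notMem_empty, iff_false, not_and]
          intro hl hli
          cases hb : l.2
          · exact hf (by rw [← Prod.mk.eta (p := l), hli, hb] at hl; exact hl)
          · exact ht (by rw [← Prod.mk.eta (p := l), hli, hb] at hl; exact hl)
        rw [hfil, Finset.sum_empty]
        simp [clauseVoter, ht, hf]
  set t := (C.filter fun l => ω l.1 = l.2).card with htdef
  set s := (C.filter fun l => ¬ (ω l.1 = l.2)).card with hsdef
  have hts : t + s = r := Finset.card_filter_add_card_filter_not _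
  have h2 : ∑ l ∈ C, (1/(r:ℝ)) * (if ω l.1 = l.2 then 1 else -1)
      = (1/(r:ℝ)) * ((t:ℝ) - s) := by
    rw [← Finset.mul_sum]
    congr 1
    rw [Finset.sum_ite, Finset.sum_const, Finset.sum_const]
    simp [htdef, hsdef, sub_eq_add_neg]
  rw [h1, h2]
  have htsR : (t:ℝ) + s = r := by exact_mod_cast hts
  constructor
  · intro h
    have h' : (1:ℝ) - r ≤ (t:ℝ) - s := by
      rw [one_div_mul_eq_div, ← neg_div, neg_sub] at h
      exact (div_le_div_iff_of_pos_right hrR).mp h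
    have h2t : (1:ℝ) ≤ 2 * t := by linarith
    have h2t' : 1 ≤ 2 * t := by exact_mod_cast h2t
    have : 1 ≤ t := by omega
    have : (C.filter fun l => ω l.1 = l.2).Nonempty :=
      Finset.card_pos.mp (by omega)
    obtain ⟨l, hl⟩ := this
    rw [Finset.mem_filter] at hl
    exact ⟨l, hl.1, hl.2⟩
  · rintro ⟨l, hl, hωl⟩
    have h1t : 1 ≤ t :=
      Finset.card_pos.mpr ⟨l, Finset.mem_filter.mpr ⟨hl, hωl⟩⟩
    have h1tR : (1:ℝ) ≤ t := by exact_mod_cast h1t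
    rw [one_div_mul_eq_div, ← neg_div, neg_sub]
    exact (div_le_div_iff_of_pos_right hrR).mpr (by linarith)

/-- Correctness of the CNF-SAT reduction to pessimistic threshold
satisfaction (Theorem 8). -/
theorem stmt_13 {n m : ℕ} (C : Fin m → Finset (Fin n × Bool))
    (hne : ∀ j, (C j).Nonempty)
    (hdist : ∀ j, ∀ l₁ ∈ C j, ∀ l₂ ∈ C j, l₁.1 = l₂.1 → l₁ = l₂) :
    (∀ (j : Fin m) (ω : Fin n → Bool),
      -((((C j).card : ℝ) - 1) / (C j).card) ≤ u (clauseVoter (C j)) ω ↔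
        ∃ l ∈ C j, ω l.1 = l.2) ∧
    ((∃ (S : Finset (Fin n → Bool)) (hS : S.Nonempty),
        ∀ j : Fin m,
          -((((C j).card : ℝ) - 1) / (C j).card) ≤
            S.inf' hS (u (clauseVoter (C j)))) ↔
      ∃ ω : Fin n → Bool, ∀ j : Fin m, ∃ l ∈ C j, ω l.1 = l.2) := by
  refine ⟨fun j ω => key (C j) (hne j) (hdist j) ω, ?_, ?_⟩
  · rintro ⟨S, hS, h⟩
    obtain ⟨ω, hω⟩ := hS
    exact ⟨ω, fun j => (key (C j) (hne j) (hdist j) ω).mp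
      (le_trans (h j) (Finset.inf'_le _ hω))⟩
  · rintro ⟨ω, hω⟩
    refine ⟨{ω}, Finset.singleton_nonempty ω, fun j => ?_⟩
    rw [Finset.inf'_singleton]
    exact (key (C j) (hne j) (hdist j) ω).mpr (hω j)
end

section
/- (Per-clause threshold characterization) For a clause C with r literals over distinct variables and the associated voter v with p_v(i) = σ_i/r for literals (i, σ_i) in C and 0 otherwise: a world ω fails to satisfy C if and only if u_v(ω) = −1, and ω satisfies C if and only if u_v(ω) ≥ −(r−2)/r > −(r−1)/r. -/
/-- Per-clause threshold characterization: ω fails C iff u = -1;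
ω satisfies C iff u ≥ -(r-2)/r; and -(r-2)/r > -(r-1)/r. -/
theorem stmt_14 {n : ℕ} (C : Finset (Fin n × Bool)) (hne : C.Nonempty)
    (hdist : ∀ l₁ ∈ C, ∀ l₂ ∈ C, l₁.1 = l₂.1 → l₁ = l₂) (ω : Fin n → Bool) :
    (¬ (∃ l ∈ C, ω l.1 = l.2) ↔ u (clauseVoter C) ω = -1) ∧
    ((∃ l ∈ C, ω l.1 = l.2) ↔
      -(((C.card : ℝ) - 2) / C.card) ≤ u (clauseVoter C) ω) ∧
    -(((C.card : ℝ) - 2) / C.card) > -(((C.card : ℝ) - 1) / C.card) := by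
  classical
  have hrpos : 0 < C.card := Finset.card_pos.mpr hne
  have hrR : (0:ℝ) < (C.card : ℝ) := by exact_mod_cast hrpos
  set S := C.filter (fun l => ω l.1 = l.2) with hS
  have hScard : S.card ≤ C.card := Finset.card_filter_le _ _
  have key : u (clauseVoter C) ω = (2 * (S.card : ℝ) - C.card) / C.card := by
    have hinj : ∀ x ∈ C, ∀ y ∈ C, x.1 = y.1 → x = y := hdist
    have h1 : ∑ i ∈ C.image Prod.fst, clauseVoter C i * sgn (ω i)
        = ∑ l ∈ C, clauseVoter C l.1 * sgn (ω l.1) :=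
      Finset.sum_image hinj
    have h0 : u (clauseVoter C) ω
        = ∑ i ∈ C.image Prod.fst, clauseVoter C i * sgn (ω i) := by
      unfold u
      refine (Finset.sum_subset (Finset.subset_univ _) ?_).symm
      intro i _ hi
      have ht : (i, true) ∉ C := fun h => hi (Finset.mem_image.mpr ⟨_, h, rfl⟩)
      have hf : (i, false) ∉ C := fun h => hi (Finset.mem_image.mpr ⟨_, h, rfl⟩)
      simp [clauseVoter, ht, hf]
    have h2 : ∀ l ∈ C, clauseVoter C l.1 * sgn (ω l.1)
        = if ω l.1 = l.2 then (1:ℝ)/C.card else -(1/C.card) := by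
      rintro ⟨i, b⟩ hl
      cases b with
      | true =>
        have : clauseVoter C i = 1 / C.card := by simp [clauseVoter, hl]
        rw [this]
        cases h : ω i <;> simp [sgn, h]
      | false =>
        have ht : (i, true) ∉ C := by
          intro h
          have := hdist _ h _ hl rfl
          simp at this
        have : clauseVoter C i = -(1 / C.card) := by simp [clauseVoter, ht, hl]
        rw [this]
        cases h : ω i <;> simp [sgn, h] <;> ring
    rw [h0, h1, Finset.sum_congr rfl h2, Finset.sum_ite, Finset.sum_const, Finset.sum_const]
    have hcards : (C.filter (fun l => ¬ ω l.1 = l.2)).card = C.card - S.card := by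
      rw [hS, Finset.filter_not, Finset.card_sdiff_of_subset (Finset.filter_subset _ _)]
    have hSc : (C.filter (fun l => ω l.1 = l.2)).card = S.card := rfl
    rw [hcards, hSc, nsmul_eq_mul, nsmul_eq_mul, Nat.cast_sub hScard]
    field_simp
    ring
  have hiff : (∃ l ∈ C, ω l.1 = l.2) ↔ 0 < S.card := by
    rw [Finset.card_pos, hS]
    constructor
    · rintro ⟨l, hl, h⟩; exact ⟨l, Finset.mem_filter.mpr ⟨hl, h⟩⟩
    · rintro ⟨l, hl⟩; exact ⟨l, (Finset.mem_filter.mp hl).1, (Finset.mem_filter.mp hl).2⟩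
  refine ⟨?_, ?_, ?_⟩
  · rw [key, hiff, not_lt, Nat.le_zero]
    rw [div_eq_iff (ne_of_gt hrR)]
    constructor
    · intro h; rw [h]; push_cast; ring
    · intro h
      have : 2 * (S.card : ℝ) = 0 := by linarith
      have : (S.card : ℝ) = 0 := by linarith
      exact_mod_cast this
  · rw [key, hiff, ← neg_div, div_le_div_iff₀ hrR hrR]
    constructor
    · intro h
      have h1 : (1:ℝ) ≤ (S.card : ℝ) := by exact_mod_cast h
      nlinarith
    · intro h
      have h1 : (1:ℝ) ≤ (S.card : ℝ) := by nlinarith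
      exact_mod_cast lt_of_lt_of_le zero_lt_one h1
  · rw [gt_iff_lt, neg_lt_neg_iff, div_lt_div_iff₀ hrR hrR]
    nlinarith
end
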